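/- Let n ≥ 1, m ≥ 1, α > 0, μ > 0, L ≥ 0, and let f : ℝⁿ → ℝ be L-smooth. Then for every p ∈ ℝⁿ, the second moment of the m-sample estimator satisfies 𝔼[‖(n/(2mα²μ)) • Σ_{i=1}^{m} (f(p + μ•vᵢ) − f(p − μ•vᵢ)) • vᵢ‖²] ≤ (n²/m)·(L·α·μ/2 + ‖∇f(p)‖)² + ((m−1)/m)·(‖∇f(p)‖² + ‖∇f(p)‖·L·n^{3/2}·α·μ + L²·n³·α²·μ²/4), where the expectation is over v₁, …, v_m drawn independently from the uniform probability measure σ_α on the origin-centered sphere of radius α (i.e. the integral over the m-fold product measure σ_α^⊗m). -/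

import Mathlib

/-!
On the sphere of radius `α`, the central-difference form of the descent lemma,
`|f (p + h) - f (p - h) - 2 ⟪∇f p, h⟫| ≤ L ‖h‖²`, bounds the single-sample estimator
`g v = (n / (2 α² μ)) (f (p + μ v) - f (p - μ v)) v` in norm by `n (L α μ / 2 + ‖∇f p‖)`.
Rotation invariance gives `n ∫ ⟪x, v⟫ v dσ = α² x`: reflections make `∫ ⟪x, v⟫² dσ` depend only
on `‖x‖`, summing over an orthonormal basis fixes the constant, and polarization does the rest.
Hence `∫ g dσ` lies within `n L α μ / 2 ≤ n^{3/2} L α μ / 2` of `∇f p`.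
For i.i.d. samples the cross terms of `‖∑ g (vᵢ)‖²` factor by independence, so
`𝔼 ‖(1/m) ∑ g (vᵢ)‖² = 𝔼 ‖g‖² / m + (1 - 1/m) ‖𝔼 g‖²`.
-/

open MeasureTheory ProbabilityTheory InnerProductSpace Module

section Smooth

variable {E : Type*} [NormedAddCommGroup E] [InnerProductSpace ℝ E] [CompleteSpace E]
  {f : E → ℝ} {L : ℝ}

theorem hasDerivAt_comp_add_smul (hf : Differentiable ℝ f) (x h : E) (t : ℝ) :
    HasDerivAt (fun s : ℝ => f (x + s • h)) ⟪gradient f (x + t • h), h⟫_ℝ t := by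
  have hline : HasDerivAt (fun s : ℝ => x + s • h) h t := by
    simpa using ((hasDerivAt_id t).smul_const h).const_add x
  simpa [toDual_apply_apply, Function.comp_def] using
    (hf (x + t • h)).hasGradientAt.hasFDerivAt.comp_hasDerivAt t hline

theorem abs_sub_sub_inner_gradient_le (hf : Differentiable ℝ f)
    (hL : ∀ x y, ‖gradient f x - gradient f y‖ ≤ L * ‖x - y‖) (x h : E) :
    |f (x + h) - f x - ⟪gradient f x, h⟫_ℝ| ≤ L / 2 * ‖h‖ ^ 2 := by
  have hφ (t : ℝ) : HasDerivAt (fun t : ℝ => f (x + t • h) - f x - t * ⟪gradient f x, h⟫_ℝ)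
      ⟪gradient f (x + t • h) - gradient f x, h⟫_ℝ t := by
    rw [inner_sub_left]
    exact ((hasDerivAt_comp_add_smul hf x h t).sub_const (f x)).sub (hasDerivAt_mul_const _)
  have hB (t : ℝ) : HasDerivAt (fun t => L / 2 * ‖h‖ ^ 2 * t ^ 2) (L * ‖h‖ ^ 2 * t) t := by
    refine ((hasDerivAt_pow 2 t).const_mul (L / 2 * ‖h‖ ^ 2)).congr_deriv ?_
    norm_num; ring
  have hbound (t : ℝ) (ht : t ∈ Set.Ico (0 : ℝ) 1) :
      ‖⟪gradient f (x + t • h) - gradient f x, h⟫_ℝ‖ ≤ L * ‖h‖ ^ 2 * t := by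
    calc ‖⟪gradient f (x + t • h) - gradient f x, h⟫_ℝ‖
        ≤ ‖gradient f (x + t • h) - gradient f x‖ * ‖h‖ := norm_inner_le_norm _ _
      _ ≤ L * ‖x + t • h - x‖ * ‖h‖ := by gcongr; exact hL _ _
      _ = L * ‖h‖ ^ 2 * t := by
        rw [add_sub_cancel_left, norm_smul, Real.norm_of_nonneg ht.1]; ring
  simpa using image_norm_le_of_norm_deriv_right_le_deriv_boundary
    (fun t _ => (hφ t).continuousAt.continuousWithinAt) (fun t _ => (hφ t).hasDerivWithinAt)
    (by simp) hB hbound (x := 1) (by simp)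

theorem abs_sub_sub_two_mul_inner_gradient_le (hf : Differentiable ℝ f)
    (hL : ∀ x y, ‖gradient f x - gradient f y‖ ≤ L * ‖x - y‖) (x h : E) :
    |f (x + h) - f (x - h) - 2 * ⟪gradient f x, h⟫_ℝ| ≤ L * ‖h‖ ^ 2 := by
  have hplus := abs_sub_sub_inner_gradient_le hf hL x h
  have hminus := abs_sub_sub_inner_gradient_le hf hL x (-h)
  rw [inner_neg_right, norm_neg, ← sub_eq_add_neg] at hminus
  calc |f (x + h) - f (x - h) - 2 * ⟪gradient f x, h⟫_ℝ|
      = |(f (x + h) - f x - ⟪gradient f x, h⟫_ℝ) - (f (x - h) - f x - -⟪gradient f x, h⟫_ℝ)| := by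
        ring_nf
    _ ≤ L / 2 * ‖h‖ ^ 2 + L / 2 * ‖h‖ ^ 2 := (abs_sub _ _).trans (add_le_add hplus hminus)
    _ = L * ‖h‖ ^ 2 := by ring

theorem abs_sub_le_two_mul_norm_gradient_add (hf : Differentiable ℝ f)
    (hL : ∀ x y, ‖gradient f x - gradient f y‖ ≤ L * ‖x - y‖) (x h : E) :
    |f (x + h) - f (x - h)| ≤ 2 * ‖gradient f x‖ * ‖h‖ + L * ‖h‖ ^ 2 := by
  have hinner : |2 * ⟪gradient f x, h⟫_ℝ| ≤ 2 * ‖gradient f x‖ * ‖h‖ := by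
    rw [abs_mul, abs_two, mul_assoc]
    exact mul_le_mul_of_nonneg_left (abs_real_inner_le_norm _ _) zero_le_two
  calc |f (x + h) - f (x - h)|
      = |(f (x + h) - f (x - h) - 2 * ⟪gradient f x, h⟫_ℝ) + 2 * ⟪gradient f x, h⟫_ℝ| := by
        ring_nf
    _ ≤ L * ‖h‖ ^ 2 + 2 * ‖gradient f x‖ * ‖h‖ :=
        (abs_add_le _ _).trans (add_le_add (abs_sub_sub_two_mul_inner_gradient_le hf hL x h) hinner)
    _ = 2 * ‖gradient f x‖ * ‖h‖ + L * ‖h‖ ^ 2 := add_comm _ _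

end Smooth

section Sphere

variable {E : Type*} [NormedAddCommGroup E] [MeasurableSpace E] [BorelSpace E]
  {σ : Measure E} {α : ℝ}

theorem Continuous.memLp_of_ae_norm_eq [ProperSpace E] {F : Type*} [NormedAddCommGroup F]
    [IsFiniteMeasure σ] (hσ : ∀ᵐ v ∂σ, ‖v‖ = α) {g : E → F} (hg : Continuous g) (p : ENNReal) :
    MemLp g p σ := by
  obtain ⟨C, hC⟩ := (isCompact_sphere (0 : E) α).exists_bound_of_continuousOn hg.continuousOn
  exact .of_bound hg.aestronglyMeasurable C
    (hσ.mono fun v hv => hC v (mem_sphere_zero_iff_norm.2 hv))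

theorem Continuous.integrable_of_ae_norm_eq [ProperSpace E] {F : Type*} [NormedAddCommGroup F]
    [IsFiniteMeasure σ] (hσ : ∀ᵐ v ∂σ, ‖v‖ = α) {g : E → F} (hg : Continuous g) : Integrable g σ :=
  memLp_one_iff_integrable.1 (hg.memLp_of_ae_norm_eq hσ 1)

variable [InnerProductSpace ℝ E]

def IsRotationInvariant (σ : Measure E) : Prop :=
  ∀ R : E ≃ₗᵢ[ℝ] E, σ.map R = σ

theorem IsRotationInvariant.integral_comp {F : Type*} [NormedAddCommGroup F] [NormedSpace ℝ F]
    (hσ : IsRotationInvariant σ) (R : E ≃ₗᵢ[ℝ] E) (g : E → F) :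
    ∫ v, g (R v) ∂σ = ∫ v, g v ∂σ :=
  MeasurePreserving.integral_comp (f := R) ⟨R.continuous.measurable, hσ R⟩
    R.toHomeomorph.measurableEmbedding g

theorem IsRotationInvariant.integral_inner_sq_eq (hσ : IsRotationInvariant σ) {x y : E}
    (h : ‖y‖ = ‖x‖) : ∫ v, ⟪x, v⟫_ℝ ^ 2 ∂σ = ∫ v, ⟪y, v⟫_ℝ ^ 2 ∂σ := by
  set R := (ℝ ∙ (y - x))ᗮ.reflection
  have hR (v : E) : ⟪x, R v⟫_ℝ = ⟪y, v⟫_ℝ := by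
    rw [← Submodule.reflection_sub h, LinearIsometryEquiv.inner_map_map]
  simp_rw [← hR, hσ.integral_comp R fun v => ⟪x, v⟫_ℝ ^ 2]

variable [FiniteDimensional ℝ E] [IsProbabilityMeasure σ]

theorem IsRotationInvariant.finrank_mul_integral_inner_sq (hσ : IsRotationInvariant σ)
    (hα : ∀ᵐ v ∂σ, ‖v‖ = α) (x : E) :
    finrank ℝ E * ∫ v, ⟪x, v⟫_ℝ ^ 2 ∂σ = α ^ 2 * ‖x‖ ^ 2 := by
  set b := stdOrthonormalBasis ℝ E
  have hb (i) : ∫ v, ⟪‖x‖ • b i, v⟫_ℝ ^ 2 ∂σ = ∫ v, ⟪x, v⟫_ℝ ^ 2 ∂σ :=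
    (hσ.integral_inner_sq_eq (by simp [norm_smul, b.orthonormal.1 i])).symm
  calc finrank ℝ E * ∫ v, ⟪x, v⟫_ℝ ^ 2 ∂σ = ∑ i, ∫ v, ⟪‖x‖ • b i, v⟫_ℝ ^ 2 ∂σ := by
        simp [hb]
    _ = ∫ v, ‖x‖ ^ 2 * ‖v‖ ^ 2 ∂σ := by
        rw [← integral_finsetSum _ fun i _ =>
          (by fun_prop : Continuous _).integrable_of_ae_norm_eq hα]
        simp_rw [real_inner_smul_left, mul_pow, ← Finset.mul_sum, b.sum_sq_inner_right]
    _ = α ^ 2 * ‖x‖ ^ 2 := by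
        rw [integral_congr_ae (hα.mono fun v hv => by rw [hv]), integral_const]
        simp [mul_comm]

theorem IsRotationInvariant.finrank_mul_integral_inner_mul_inner (hσ : IsRotationInvariant σ)
    (hα : ∀ᵐ v ∂σ, ‖v‖ = α) (x y : E) :
    finrank ℝ E * ∫ v, ⟪x, v⟫_ℝ * ⟪y, v⟫_ℝ ∂σ = α ^ 2 * ⟪x, y⟫_ℝ := by
  have hint (z : E) : Integrable (fun v => ⟪z, v⟫_ℝ ^ 2) σ :=
    (by fun_prop : Continuous _).integrable_of_ae_norm_eq hα
  have hpol : ∫ v, ⟪x, v⟫_ℝ * ⟪y, v⟫_ℝ ∂σ = (∫ v, ⟪x + y, v⟫_ℝ ^ 2 ∂σ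
      - ∫ v, ⟪x, v⟫_ℝ ^ 2 ∂σ - ∫ v, ⟪y, v⟫_ℝ ^ 2 ∂σ) / 2 := by
    have hint' : Integrable (fun v => ⟪x + y, v⟫_ℝ ^ 2 - ⟪x, v⟫_ℝ ^ 2) σ := (hint _).sub (hint _)
    rw [← integral_sub (hint _) (hint _), ← integral_sub hint' (hint _), ← integral_div]
    congr with v
    rw [inner_add_left]; ring
  have hQ := hσ.finrank_mul_integral_inner_sq hα
  rw [hpol, mul_div_assoc', mul_sub, mul_sub, hQ, hQ, hQ, norm_add_sq_real]
  ring

theorem IsRotationInvariant.finrank_smul_integral_inner_smul (hσ : IsRotationInvariant σ)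
    (hα : ∀ᵐ v ∂σ, ‖v‖ = α) (x : E) :
    (finrank ℝ E : ℝ) • ∫ v, ⟪x, v⟫_ℝ • v ∂σ = α ^ 2 • x := by
  refine ext_inner_right ℝ fun w => ?_
  rw [real_inner_smul_left, real_inner_smul_left, real_inner_comm,
    ← integral_inner ((by fun_prop : Continuous _).integrable_of_ae_norm_eq hα)]
  simp_rw [real_inner_smul_right, real_inner_comm w]
  rw [hσ.finrank_mul_integral_inner_mul_inner hα, real_inner_comm]

end Sphere

section SampleMean

variable {Ω F ι : Type*} [MeasurableSpace Ω] {σ : Measure Ω} [IsProbabilityMeasure σ]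
  [NormedAddCommGroup F] [InnerProductSpace ℝ F] [MeasurableSpace F]
  [BorelSpace F] [Fintype ι] {X : Ω → F}

theorem integrable_inner_comp_eval_pi (hX : MemLp X 2 σ) (i j : ι) :
    Integrable (fun x : ι → Ω => ⟪X (x i), X (x j)⟫_ℝ) (Measure.pi fun _ => σ) := by
  obtain rfl | hij := eq_or_ne i j
  · simp_rw [real_inner_self_eq_norm_sq]
    exact integrable_comp_eval (μ := fun _ => σ) (hX.integrable_norm_pow two_ne_zero)
  · have hX1 := hX.integrable one_le_two
    have hY (k : ι) := integrable_comp_eval (μ := fun _ => σ) (i := k) hX1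
    exact ((iIndepFun_pi fun _ => hX1.aemeasurable).indepFun hij).integrable_bilin
      (hY i) (hY j) (innerSL ℝ)

theorem integral_inner_comp_eval_pi [CompleteSpace F] [DecidableEq ι] (hX : MemLp X 2 σ) (i j : ι) :
    ∫ x, ⟪X (x i), X (x j)⟫_ℝ ∂(Measure.pi fun _ => σ) =
      if i = j then ∫ ω, ‖X ω‖ ^ 2 ∂σ else ‖∫ ω, X ω ∂σ‖ ^ 2 := by
  split_ifs with hij
  · subst hij
    simp_rw [real_inner_self_eq_norm_sq]
    exact integral_comp_eval (μ := fun _ => σ) (hX.1.norm.pow 2)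
  · have hX1 := hX.integrable one_le_two
    have hY (k : ι) := integrable_comp_eval (μ := fun _ => σ) (i := k) hX1
    refine (((iIndepFun_pi fun _ => hX1.aemeasurable).indepFun hij).integral_bilin
      (hY i) (hY j) (innerSL ℝ)).trans ?_
    rw [integral_comp_eval (μ := fun _ => σ) hX.1, integral_comp_eval (μ := fun _ => σ) hX.1]
    exact real_inner_self_eq_norm_sq _

theorem integral_norm_sum_sq_pi [CompleteSpace F] (hX : MemLp X 2 σ) :
    ∫ x : ι → Ω, ‖∑ i, X (x i)‖ ^ 2 ∂(Measure.pi fun _ => σ) =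
      (Fintype.card ι : ℝ) * ∫ ω, ‖X ω‖ ^ 2 ∂σ
        + (Fintype.card ι : ℝ) * ((Fintype.card ι : ℝ) - 1) * ‖∫ ω, X ω ∂σ‖ ^ 2 := by
  classical
  have hexpand (x : ι → Ω) : ‖∑ i, X (x i)‖ ^ 2 = ∑ i, ∑ j, ⟪X (x i), X (x j)⟫_ℝ := by
    simp_rw [← real_inner_self_eq_norm_sq, sum_inner, inner_sum]
  simp_rw [hexpand]
  rw [integral_finsetSum _ fun i _ => integrable_finsetSum _ fun j _ =>
    integrable_inner_comp_eval_pi hX i j]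
  simp_rw [integral_finsetSum _ fun j _ => integrable_inner_comp_eval_pi hX _ j,
    integral_inner_comp_eval_pi hX]
  simp only [Finset.sum_ite, Finset.filter_eq, Finset.mem_univ, ↓reduceIte, Finset.sum_const,
    Finset.card_singleton, one_smul, ← ne_eq, Finset.filter_ne, Finset.card_erase_of_mem,
    Finset.card_univ, nsmul_eq_mul, smul_add, add_right_inj]
  obtain h | h := (Fintype.card ι).eq_zero_or_pos
  · simp [h]
  · rw [Nat.cast_pred h]; ring

theorem integral_norm_inv_card_smul_sum_sq_pi [CompleteSpace F] (hX : MemLp X 2 σ) :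
    ∫ x : ι → Ω, ‖(Fintype.card ι : ℝ)⁻¹ • ∑ i, X (x i)‖ ^ 2 ∂(Measure.pi fun _ => σ) =
      (∫ ω, ‖X ω‖ ^ 2 ∂σ) / Fintype.card ι
        + (Fintype.card ι - 1) / Fintype.card ι * ‖∫ ω, X ω ∂σ‖ ^ 2 := by
  simp_rw [norm_smul, norm_inv, Real.norm_natCast, mul_pow]
  rw [integral_const_mul, integral_norm_sum_sq_pi hX]
  obtain h | h := eq_or_ne (Fintype.card ι : ℝ) 0
  · simp [h]
  · field_simp

end SampleMean

section Estimator

variable {E : Type*} [NormedAddCommGroup E] [InnerProductSpace ℝ E]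
  {f : E → ℝ} {L α μ : ℝ} {p : E}

noncomputable def twoPointEstimator (f : E → ℝ) (α μ : ℝ) (p v : E) : E :=
  (finrank ℝ E / (2 * α ^ 2 * μ) * (f (p + μ • v) - f (p - μ • v))) • v

theorem continuous_twoPointEstimator (hf : Continuous f) :
    Continuous (twoPointEstimator f α μ p) := by
  unfold twoPointEstimator
  fun_prop

variable [CompleteSpace E]

theorem twoPointEstimator_sub_smul_eq (hμ : μ ≠ 0) (v : E) :
    twoPointEstimator f α μ p v - (finrank ℝ E / α ^ 2 * ⟪gradient f p, v⟫_ℝ) • v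
      = (finrank ℝ E / (2 * α ^ 2 * μ)
          * (f (p + μ • v) - f (p - μ • v) - 2 * ⟪gradient f p, μ • v⟫_ℝ)) • v := by
  rw [twoPointEstimator, ← sub_smul, real_inner_smul_right]
  congr 1
  field_simp

theorem norm_twoPointEstimator_le (hf : Differentiable ℝ f)
    (hL : ∀ x y, ‖gradient f x - gradient f y‖ ≤ L * ‖x - y‖) (hα : 0 < α) (hμ : 0 < μ)
    {v : E} (hv : ‖v‖ = α) :
    ‖twoPointEstimator f α μ p v‖ ≤ finrank ℝ E * (L * α * μ / 2 + ‖gradient f p‖) := by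
  have hΔ := abs_sub_le_two_mul_norm_gradient_add hf hL p (μ • v)
  rw [norm_smul, Real.norm_of_nonneg hμ.le, hv] at hΔ
  rw [twoPointEstimator, norm_smul, Real.norm_eq_abs, abs_mul, hv,
    abs_of_nonneg (by positivity : (0 : ℝ) ≤ finrank ℝ E / (2 * α ^ 2 * μ))]
  calc finrank ℝ E / (2 * α ^ 2 * μ) * |f (p + μ • v) - f (p - μ • v)| * α
      ≤ finrank ℝ E / (2 * α ^ 2 * μ) * (2 * ‖gradient f p‖ * (μ * α) + L * (μ * α) ^ 2) * α := by
        gcongr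
    _ = finrank ℝ E * (L * α * μ / 2 + ‖gradient f p‖) := by
        field_simp
        ring

variable [FiniteDimensional ℝ E] [MeasurableSpace E] [BorelSpace E] {σ : Measure E}
  [IsProbabilityMeasure σ]

theorem norm_integral_twoPointEstimator_sub_gradient_le (hσ : IsRotationInvariant σ)
    (hσα : ∀ᵐ v ∂σ, ‖v‖ = α) (hf : Differentiable ℝ f)
    (hL : ∀ x y, ‖gradient f x - gradient f y‖ ≤ L * ‖x - y‖) (hα : 0 < α) (hμ : 0 < μ) :
    ‖∫ v, twoPointEstimator f α μ p v ∂σ - gradient f p‖ ≤ finrank ℝ E * L * α * μ / 2 := by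
  have hmean : ∫ v, (finrank ℝ E / α ^ 2 * ⟪gradient f p, v⟫_ℝ) • v ∂σ = gradient f p := by
    simp_rw [div_eq_inv_mul, mul_assoc, ← smul_smul]
    rw [integral_smul, integral_smul, hσ.finrank_smul_integral_inner_smul hσα, smul_smul,
      inv_mul_cancel₀ (by positivity), one_smul]
  rw [← hmean, ← integral_sub
    ((continuous_twoPointEstimator hf.continuous).integrable_of_ae_norm_eq hσα)
    ((by fun_prop : Continuous _).integrable_of_ae_norm_eq hσα)]
  simp_rw [twoPointEstimator_sub_smul_eq hμ.ne']
  refine (norm_integral_le_of_norm_le_const (C := finrank ℝ E * L * α * μ / 2)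
    (hσα.mono fun v hv => ?_)).trans_eq (by rw [probReal_univ, mul_one])
  have hΔ := abs_sub_sub_two_mul_inner_gradient_le hf hL p (μ • v)
  rw [norm_smul, Real.norm_of_nonneg hμ.le, hv] at hΔ
  rw [norm_smul, Real.norm_eq_abs, abs_mul, hv,
    abs_of_nonneg (by positivity : (0 : ℝ) ≤ finrank ℝ E / (2 * α ^ 2 * μ))]
  calc finrank ℝ E / (2 * α ^ 2 * μ)
        * |f (p + μ • v) - f (p - μ • v) - 2 * ⟪gradient f p, μ • v⟫_ℝ| * α
      ≤ finrank ℝ E / (2 * α ^ 2 * μ) * (L * (μ * α) ^ 2) * α := by gcongr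
    _ = finrank ℝ E * L * α * μ / 2 := by
        field_simp

theorem integral_norm_twoPointEstimator_sq_le (hσα : ∀ᵐ v ∂σ, ‖v‖ = α) (hf : Differentiable ℝ f)
    (hL : ∀ x y, ‖gradient f x - gradient f y‖ ≤ L * ‖x - y‖) (hα : 0 < α) (hμ : 0 < μ) :
    ∫ v, ‖twoPointEstimator f α μ p v‖ ^ 2 ∂σ
      ≤ (finrank ℝ E * (L * α * μ / 2 + ‖gradient f p‖)) ^ 2 := by
  have hbound : ∀ᵐ v ∂σ, ‖twoPointEstimator f α μ p v‖ ^ 2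
      ≤ (finrank ℝ E * (L * α * μ / 2 + ‖gradient f p‖)) ^ 2 := hσα.mono fun v hv =>
    pow_le_pow_left₀ (norm_nonneg _) (norm_twoPointEstimator_le hf hL hα hμ hv) 2
  exact (integral_mono_ae
    (((continuous_twoPointEstimator hf.continuous).norm.pow 2).integrable_of_ae_norm_eq hσα)
    (integrable_const _) hbound).trans_eq (by simp)

end Estimator

/-- For an `L`-smooth `f : ℝⁿ → ℝ`, the second moment of the `m`-sample
ensembled two-point zeroth-order gradient estimator is at most
`(n²/m)·(Lαμ/2 + ‖∇f(p)‖)² + ((m−1)/m)·(‖∇f(p)‖² + ‖∇f(p)‖·L·n^{3/2}·α·μ + L²n³α²μ²/4)`. -/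
theorem gw_estimator_second_moment_ensembled
    (n m : ℕ) (hn : 1 ≤ n) (hm : 1 ≤ m) (α μ L : ℝ) (hα : 0 < α) (hμ : 0 < μ) (hL : 0 ≤ L)
    (σ : Measure (EuclideanSpace ℝ (Fin n))) [IsProbabilityMeasure σ]
    (hσ_sphere : ∀ᵐ v ∂σ, ‖v‖ = α)
    (hσ_rot : ∀ R : EuclideanSpace ℝ (Fin n) ≃ₗᵢ[ℝ] EuclideanSpace ℝ (Fin n),
      Measure.map R σ = σ)
    (f : EuclideanSpace ℝ (Fin n) → ℝ)
    (hf_diff : Differentiable ℝ f)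
    (hf_smooth : ∀ x y, ‖gradient f x - gradient f y‖ ≤ L * ‖x - y‖)
    (p : EuclideanSpace ℝ (Fin n)) :
    ∫ v, ‖((n : ℝ) / (2 * m * α ^ 2 * μ)) •
            ∑ i : Fin m, (f (p + μ • v i) - f (p - μ • v i)) • v i‖ ^ 2
        ∂(Measure.pi fun _ : Fin m => σ)
      ≤ (n : ℝ) ^ 2 / m * (L * α * μ / 2 + ‖gradient f p‖) ^ 2
          + ((m : ℝ) - 1) / m *
              (‖gradient f p‖ ^ 2 + ‖gradient f p‖ * L * (n : ℝ) ^ ((3 : ℝ) / 2) * α * μ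
                + L ^ 2 * (n : ℝ) ^ 3 * α ^ 2 * μ ^ 2 / 4) := by
  set g := twoPointEstimator f α μ p
  have hg : Continuous g := continuous_twoPointEstimator hf_diff.continuous
  have hsample (v : Fin m → EuclideanSpace ℝ (Fin n)) :
      ((n : ℝ) / (2 * m * α ^ 2 * μ)) • ∑ i, (f (p + μ • v i) - f (p - μ • v i)) • v i
        = (Fintype.card (Fin m) : ℝ)⁻¹ • ∑ i, g (v i) := by
    simp only [g, twoPointEstimator, finrank_euclideanSpace_fin, Fintype.card_fin,
      Finset.smul_sum, smul_smul]
    congr! 2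
    field_simp
  have hsecond := integral_norm_twoPointEstimator_sq_le hσ_sphere hf_diff hf_smooth hα hμ (p := p)
  have hbias := norm_integral_twoPointEstimator_sub_gradient_le hσ_rot hσ_sphere hf_diff
    hf_smooth hα hμ (p := p)
  rw [finrank_euclideanSpace_fin] at hsecond hbias
  have hn32 : (n : ℝ) ≤ n ^ ((3 : ℝ) / 2) :=
    Real.self_le_rpow_of_one_le (by exact_mod_cast hn) (by norm_num)
  have hmean : ‖∫ v, g v ∂σ‖ ≤ ‖gradient f p‖ + n ^ ((3 : ℝ) / 2) * L * α * μ / 2 :=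
    calc ‖∫ v, g v ∂σ‖ ≤ ‖gradient f p‖ + ‖∫ v, g v ∂σ - gradient f p‖ := norm_le_insert' _ _
      _ ≤ ‖gradient f p‖ + n * L * α * μ / 2 := by gcongr
      _ ≤ ‖gradient f p‖ + n ^ ((3 : ℝ) / 2) * L * α * μ / 2 := by gcongr
  have hm1 : 0 ≤ ((m : ℝ) - 1) / m := div_nonneg (by simp [hm]) (Nat.cast_nonneg m)
  have hn3 : ((n : ℝ) ^ ((3 : ℝ) / 2)) ^ 2 = n ^ 3 := by
    rw [← Real.rpow_mul_natCast (Nat.cast_nonneg n)]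
    norm_num
  simp_rw [hsample]
  rw [integral_norm_inv_card_smul_sum_sq_pi (hg.memLp_of_ae_norm_eq hσ_sphere 2),
    Fintype.card_fin]
  calc (∫ v, ‖g v‖ ^ 2 ∂σ) / m + (m - 1) / m * ‖∫ v, g v ∂σ‖ ^ 2
      ≤ (n * (L * α * μ / 2 + ‖gradient f p‖)) ^ 2 / m
          + (m - 1) / m * (‖gradient f p‖ + n ^ ((3 : ℝ) / 2) * L * α * μ / 2) ^ 2 := by
        gcongr
    _ = _ := by linear_combination ((m : ℝ) - 1) / m * (L ^ 2 * α ^ 2 * μ ^ 2 / 4) * hn3
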